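/- arXiv:1405.3460 — 2 statements merged into one kernel-verified Lean document; each statement's English description precedes it below -/
import Mathlib

section
/- (Dictator property for OLF) Let S be an OLF system on an odd number n of actors, and let i be an actor whose set of successors is all the other actors, i.e., S(i) = V \ {i}. Then SAT_S(i) = 2^n. -/
/-! Every actor other than `i` is a follower whose only opinion leader is `i`, and `i` itself has
no leader, so the collective decision vector is the constant vector `x i`. Its majority is
`x i` (there is at least one actor), hence `i` is satisfied by every initial decision vector. -/

open Finset

/-- The set of predecessors of `i` in the digraph with edge set `E`. -/
def preds {n : ℕ} (E : Finset (Fin n × Fin n)) (i : Fin n) : Finset (Fin n) :=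
  Finset.univ.filter (fun j => (j, i) ∈ E)

/-- The set of successors of `i` in the digraph with edge set `E`. -/
def succs {n : ℕ} (E : Finset (Fin n × Fin n)) (i : Fin n) : Finset (Fin n) :=
  Finset.univ.filter (fun j => (i, j) ∈ E)

/-- `E` is the edge set of an OLF system: every edge runs from a vertex with no
predecessors (an opinion leader) to a vertex with no successors (a follower). -/
def IsOLF {n : ℕ} (E : Finset (Fin n × Fin n)) : Prop :=
  ∀ e ∈ E, preds E e.1 = ∅ ∧ succs E e.2 = ∅

/-- One step of the unanimity rule: actor `i` adopts the common decision of its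
predecessors (as recorded in `c`) if they are nonempty and unanimous, and keeps
its own initial decision `x i` otherwise. -/
def unanStep {n : ℕ} (E : Finset (Fin n × Fin n)) (x c : Fin n → Bool) (i : Fin n) : Bool :=
  if (preds E i).Nonempty ∧ ∀ j ∈ preds E i, c j = true then true
  else if (preds E i).Nonempty ∧ ∀ j ∈ preds E i, c j = false then false
  else x i

/-- The collective decision vector of an OLF system. -/
def olfVec {n : ℕ} (E : Finset (Fin n × Fin n)) (x : Fin n → Bool) : Fin n → Bool :=
  unanStep E x x

/-- Simple majority over a decision vector. -/
def majority {n : ℕ} (c : Fin n → Bool) : Bool :=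
  decide ((Finset.univ.filter (fun i => c i = true)).card >
          (Finset.univ.filter (fun i => c i = false)).card)

/-- The collective decision function of an OLF system. -/
def olfC {n : ℕ} (E : Finset (Fin n × Fin n)) (x : Fin n → Bool) : Bool :=
  majority (olfVec E x)

/-- The satisfaction score of actor `i` under a collective decision making model `C`. -/
def SAT {n : ℕ} (C : (Fin n → Bool) → Bool) (i : Fin n) : ℕ :=
  (Finset.univ.filter (fun x : Fin n → Bool => C x = x i)).card

theorem mem_preds {n : ℕ} {E : Finset (Fin n × Fin n)} {i j : Fin n} :
    j ∈ preds E i ↔ (j, i) ∈ E := by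
  simp [preds]

theorem mem_succs {n : ℕ} {E : Finset (Fin n × Fin n)} {i j : Fin n} :
    j ∈ succs E i ↔ (i, j) ∈ E := by
  simp [succs]

section UnanimityRule

variable {n : ℕ} {E : Finset (Fin n × Fin n)} {x c : Fin n → Bool} {j k : Fin n}

theorem unanStep_of_preds_eq_empty (h : preds E j = ∅) : unanStep E x c j = x j := by
  simp [unanStep, h]

theorem unanStep_of_preds_eq_singleton (h : preds E j = {k}) : unanStep E x c j = c k := by
  cases hk : c k <;> simp [unanStep, h, hk]

end UnanimityRule

theorem majority_const {n : ℕ} (hn : 0 < n) (b : Bool) : majority (fun _ : Fin n => b) = b := by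
  cases b <;> simp [majority, hn]

theorem SAT_eq_two_pow_of_forall {n : ℕ} {C : (Fin n → Bool) → Bool} {i : Fin n}
    (h : ∀ x, C x = x i) : SAT C i = 2 ^ n := by
  simp [SAT, h]

def IsDictator {n : ℕ} (E : Finset (Fin n × Fin n)) (i : Fin n) : Prop :=
  succs E i = univ \ {i}

namespace IsDictator

variable {n : ℕ} {E : Finset (Fin n × Fin n)} {i : Fin n}

theorem mem_edges (h : IsDictator E i) {j : Fin n} (hj : j ≠ i) : (i, j) ∈ E := by
  rw [← mem_succs, h]
  simp [hj]

/-- Any predecessor `k` of `i` would also be a successor of `i` (via the loop if `k = i`),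
while an OLF follower has no successors. -/
theorem preds_eq_empty (h : IsDictator E i) (hE : IsOLF E) : preds E i = ∅ := by
  refine eq_empty_iff_forall_notMem.mpr fun k hk => ?_
  have hki : (k, i) ∈ E := mem_preds.mp hk
  have hk_succ : k ∈ succs E i := by
    by_cases hk_eq : k = i
    · subst hk_eq
      exact mem_succs.mpr hki
    · exact mem_succs.mpr (h.mem_edges hk_eq)
  simp [(hE _ hki).2] at hk_succ

theorem preds_eq_singleton (h : IsDictator E i) (hE : IsOLF E) {j : Fin n} (hj : j ≠ i) :
    preds E j = {i} := by
  ext k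
  rw [mem_preds, mem_singleton]
  constructor
  · intro hkj
    by_contra hki
    have hi_pred : i ∈ preds E k := mem_preds.mpr (h.mem_edges hki)
    simp [(hE _ hkj).1] at hi_pred
  · rintro rfl
    exact h.mem_edges hj

theorem olfVec_eq_const (h : IsDictator E i) (hE : IsOLF E) (x : Fin n → Bool) :
    olfVec E x = fun _ => x i := by
  funext j
  by_cases hj : j = i
  · subst hj
    exact unanStep_of_preds_eq_empty (h.preds_eq_empty hE)
  · exact unanStep_of_preds_eq_singleton (h.preds_eq_singleton hE hj)

end IsDictator

theorem olf_dictator_general (n : ℕ) (E : Finset (Fin n × Fin n)) (hE : IsOLF E)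
    (i : Fin n) (hsucc : succs E i = Finset.univ \ {i}) :
    SAT (olfC E) i = 2 ^ n := by
  have hdict : IsDictator E i := hsucc
  refine SAT_eq_two_pow_of_forall fun x => ?_
  rw [olfC, hdict.olfVec_eq_const hE, majority_const i.pos]

/-- Dictator property for OLF systems: an actor whose set of successors is all
the other actors has satisfaction score `2^n`. -/
theorem olf_dictator (n : ℕ) (hn : Odd n) (E : Finset (Fin n × Fin n)) (hE : IsOLF E)
    (i : Fin n) (hsucc : succs E i = Finset.univ \ {i}) :
    SAT (olfC E) i = 2 ^ n :=
  olf_dictator_general n E hE i hsucc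
end

section
/- (Horizontal neutrality for OLF) Let S and S' be two OLF systems on the same odd number n of actors with the same vertex set, where in S actor i is an opinion leader or independent actor, actor j is a follower, actor h is an opinion leader with h ∈ P_G(j), and E(G') = E(G) ∪ {(i,j)}. Then SAT_{S'}(i) - SAT_S(i) = SAT_S(h) - SAT_{S'}(h). -/
open Finset

lemma preds_insert_ne {n : ℕ} (E : Finset (Fin n × Fin n)) (i j k : Fin n) (hk : k ≠ j) :
    preds (insert (i, j) E) k = preds E k := by
  ext p
  simp [preds, Prod.ext_iff, hk]

lemma preds_insert_self {n : ℕ} (E : Finset (Fin n × Fin n)) (i j : Fin n) :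
    preds (insert (i, j) E) j = insert i (preds E j) := by
  ext p
  simp [preds, Prod.ext_iff]

lemma vec_eq {n : ℕ} (E : Finset (Fin n × Fin n)) (i j h : Fin n)
    (hhj : h ∈ preds E j) (x : Fin n → Bool) (hx : x i = x h) :
    olfVec (insert (i, j) E) x = olfVec E x := by
  funext k
  by_cases hk : k = j
  · obtain rfl : j = k := hk.symm
    unfold olfVec unanStep
    rw [preds_insert_self]
    by_cases h1 : ∀ m ∈ preds E j, x m = true
    · have hi' : x i = true := by rw [hx]; exact h1 h hhj
      have hall : ∀ m ∈ insert i (preds E j), x m = true := by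
        intro m hm
        rcases Finset.mem_insert.mp hm with rfl | hm
        · exact hi'
        · exact h1 m hm
      rw [if_pos ⟨⟨i, Finset.mem_insert_self i _⟩, hall⟩, if_pos ⟨⟨h, hhj⟩, h1⟩]
    · by_cases h2 : ∀ m ∈ preds E j, x m = false
      · have hi' : x i = false := by rw [hx]; exact h2 h hhj
        have hall : ∀ m ∈ insert i (preds E j), x m = false := by
          intro m hm
          rcases Finset.mem_insert.mp hm with rfl | hm
          · exact hi'
          · exact h2 m hm
        have h1' : ¬ ((insert i (preds E j)).Nonempty ∧ ∀ m ∈ insert i (preds E j), x m = true) := by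
          rintro ⟨-, ht⟩
          have := ht h (Finset.mem_insert_of_mem hhj)
          rw [h2 h hhj] at this; exact Bool.false_ne_true this
        rw [if_neg h1', if_pos ⟨⟨i, Finset.mem_insert_self i _⟩, hall⟩,
            if_neg (by rintro ⟨-, ht⟩; exact h1 ht), if_pos ⟨⟨h, hhj⟩, h2⟩]
      · have h1' : ¬ ((insert i (preds E j)).Nonempty ∧ ∀ m ∈ insert i (preds E j), x m = true) := by
          rintro ⟨-, ht⟩
          exact h1 (fun m hm => ht m (Finset.mem_insert_of_mem hm))
        have h2' : ¬ ((insert i (preds E j)).Nonempty ∧ ∀ m ∈ insert i (preds E j), x m = false) := by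
          rintro ⟨-, ht⟩
          exact h2 (fun m hm => ht m (Finset.mem_insert_of_mem hm))
        rw [if_neg h1', if_neg h2',
            if_neg (by rintro ⟨-, ht⟩; exact h1 ht),
            if_neg (by rintro ⟨-, ht⟩; exact h2 ht)]
  · unfold olfVec unanStep
    rw [preds_insert_ne E i j k hk]

/-- Horizontal neutrality for OLF systems: if `i` is an opinion leader or
independent actor, `j` is a follower, `h` is an opinion leader of `j`, and the
second system is obtained by adding the edge `(i, j)`, then the gain of `i`
equals the loss of `h`. -/
theorem olf_horizontal_neutrality (n : ℕ) (hn : Odd n)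
    (E : Finset (Fin n × Fin n)) (hE : IsOLF E)
    (i j h : Fin n) (hij : i ≠ j) (hih : i ≠ h) (hjh : j ≠ h)
    (hi : preds E i = ∅)
    (hjP : (preds E j).Nonempty) (hjS : succs E j = ∅)
    (hhP : preds E h = ∅) (hhj : h ∈ preds E j)
    (hE' : IsOLF (insert (i, j) E)) :
    (SAT (olfC (insert (i, j) E)) i : ℤ) - SAT (olfC E) i =
      (SAT (olfC E) h : ℤ) - SAT (olfC (insert (i, j) E)) h := by
  have key : SAT (olfC (insert (i, j) E)) i + SAT (olfC (insert (i, j) E)) h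
      = SAT (olfC E) i + SAT (olfC E) h := by
    unfold SAT
    rw [Finset.card_filter, Finset.card_filter, Finset.card_filter, Finset.card_filter,
        ← Finset.sum_add_distrib, ← Finset.sum_add_distrib]
    apply Finset.sum_congr rfl
    intro x _
    by_cases hx : x i = x h
    · have : olfC (insert (i, j) E) x = olfC E x := by
        unfold olfC
        rw [vec_eq E i j h hhj x hx]
      rw [this]
    · cases hb : olfC (insert (i, j) E) x <;> cases hc : olfC E x <;>
        cases hxi : x i <;> cases hxh : x h <;> simp_all
  omega
end
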